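/- Assume P is transitive and irreflexive. Then the Weak Supplementation Principle holds if and only if for every S : Set U and all x, y ∈ U, if x is a mereological sum of S and y is a supremum of S, then x = y. -/

import Mathlib

variable {U : Type*}

/-- `x` is an ingrediens of `y`. -/
def Ing (P : U → U → Prop) (x y : U) : Prop := x = y ∨ P x y

/-- `x` and `y` overlap. -/
def Ov (P : U → U → Prop) (x y : U) : Prop := ∃ z, Ing P z x ∧ Ing P z y

/-- `x` is exterior to `y`. -/
def MExt (P : U → U → Prop) (x y : U) : Prop := ¬ Ov P x y

/-- `x` is a mereological sum of all elements of `S`. -/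
def MSum (P : U → U → Prop) (x : U) (S : Set U) : Prop :=
  (∀ s ∈ S, Ing P s x) ∧ ∀ u, Ing P u x → ∃ s ∈ S, Ov P s u

/-- `x` is a supremum (least upper bound) of `S`. -/
def MSup (P : U → U → Prop) (x : U) (S : Set U) : Prop :=
  (∀ s ∈ S, Ing P s x) ∧ ∀ u, (∀ s ∈ S, Ing P s u) → Ing P x u

/-- `x` and `y` cross (properly overlap). -/
def POv (P : U → U → Prop) (x y : U) : Prop :=
  x ≠ y ∧ ¬ P x y ∧ ¬ P y x ∧ ∃ z, P z x ∧ P z y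

section

variable {P : U → U → Prop} {x y z : U}

theorem Ing.refl (x : U) : Ing P x x := Or.inl rfl

theorem Ing.trans (htrans : ∀ x y z, P x y → P y z → P x z)
    (hxy : Ing P x y) (hyz : Ing P y z) : Ing P x z := by
  rcases hxy with rfl | hxy
  · exact hyz
  rcases hyz with rfl | hyz
  · exact Or.inr hxy
  · exact Or.inr (htrans x y z hxy hyz)

theorem Ing.ov (h : Ing P x y) : Ov P x y := ⟨x, Ing.refl x, h⟩

theorem Ov.symm (h : Ov P x y) : Ov P y x :=
  let ⟨w, hwx, hwy⟩ := h
  ⟨w, hwy, hwx⟩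

theorem Ov.mono_left (htrans : ∀ x y z, P x y → P y z → P x z)
    (h : Ov P x z) (hxy : Ing P x y) : Ov P y z :=
  let ⟨w, hwx, hwz⟩ := h
  ⟨w, hwx.trans htrans hxy, hwz⟩

end

theorem MSup.singleton (P : U → U → Prop) (y : U) : MSup P y {y} :=
  ⟨fun _ hs => Or.inl hs, fun _ hu => hu y rfl⟩

theorem msum_singleton_iff {P : U → U → Prop} {x y : U} :
    MSum P x {y} ↔ Ing P y x ∧ ∀ u, Ing P u x → Ov P y u := by
  simp only [MSum, Set.mem_singleton_iff, forall_eq, exists_eq_left]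

theorem MSum.ov_of_upperBound {P : U → U → Prop} {S : Set U} {x y u : U}
    (htrans : ∀ x y z, P x y → P y z → P x z) (hx : MSum P x S)
    (hy : ∀ s ∈ S, Ing P s y) (hu : Ing P u x) : Ov P u y := by
  obtain ⟨s, hs, hsu⟩ := hx.2 u hu
  exact (hsu.mono_left htrans (hy s hs)).symm

theorem stmt_4 (P : U → U → Prop)
    (htrans : ∀ x y z, P x y → P y z → P x z)
    (hirr : ∀ x, ¬ P x x) :
    (∀ x y, P y x → ∃ z, P z x ∧ MExt P z y) ↔
      (∀ (S : Set U) (x y : U), MSum P x S → MSup P y S → x = y) := by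
  constructor
  · intro wsp S x y hsum hsup
    -- A proper part `y` of `x` would leave a remainder exterior to `y`, yet every part of a sum
    -- meets every upper bound of `S`.
    rcases hsup.2 x hsum.1 with hyx | hyx
    · exact hyx.symm
    obtain ⟨z, hzx, hzy⟩ := wsp x y hyx
    exact absurd (hsum.ov_of_upperBound htrans hsup.1 (Or.inr hzx)) hzy
  · intro hsum_eq x y hyx
    by_contra! hno_rest
    -- Without a remainder, `x` is a sum of `{y}`, whose supremum is `y`.
    have hsum : MSum P x {y} := by
      refine msum_singleton_iff.2 ⟨Or.inr hyx, fun u hu => ?_⟩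
      rcases hu with rfl | hux
      · exact Ing.ov (Or.inr hyx)
      · exact (not_not.1 (hno_rest u hux)).symm
    exact hirr x (hsum_eq {y} x y hsum (MSup.singleton P y) ▸ hyx)
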